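/- Let c_{ij} (1 ≤ i < j ≤ n) and ℓ_1,…,ℓ_n be fixed integers with ℓ_i ≥ 0 for all i, and let (C(c,ℓ), ρ) be the corresponding Grossberg–Karshon twisted cube. If there exist two distinct indices i and j with 1 ≤ i < j ≤ n such that c_{ij} > 1 and ℓ_i = ℓ_j > 0, then (C(c,ℓ), ρ) is twisted. -/

import Mathlib

/-!
A convex hull of finitely many points is compact, but `C(c,ℓ)` is not. Put `x_k = 0` for `k > j`,
`x_j = ℓ_j`, and keep every other `x_k` with `i < k` in `[-ε, 0]` for a small `ε`; then
`A_i(x) ≤ ℓ_i − c_{ij} ℓ_j + 1/2 < 0`, a value not depending on the coordinates at or below `i`.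
So `x_i = t A_i(x)` is admissible for every `0 < t < 1`, the coordinates below `i` can always be
completed admissibly, and letting `t → 0` produces a limit point with `x_i = 0 > A_i(x)`, which
lies outside the cube.
-/

open Finset

/-- `A_j(x) = ℓ_j − Σ_{k>j} c_{jk} x_k` (for the last index the sum is empty). -/
noncomputable def GKA {n : ℕ} (c : Fin n → Fin n → ℤ) (ℓ : Fin n → ℤ)
    (j : Fin n) (x : Fin n → ℝ) : ℝ :=
  (ℓ j : ℝ) - ∑ k ∈ Finset.univ.filter (fun k : Fin n => j < k), (c j k : ℝ) * x k

/-- The Grossberg–Karshon twisted cube `C(c,ℓ)`. -/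
noncomputable def GKcube {n : ℕ} (c : Fin n → Fin n → ℤ) (ℓ : Fin n → ℤ) :
    Set (Fin n → ℝ) :=
  {x | ∀ j : Fin n, (GKA c ℓ j x < x j ∧ x j < 0) ∨ (0 ≤ x j ∧ x j ≤ GKA c ℓ j x)}

/-- `sgn(t) = 1` for `t < 0` and `−1` for `t ≥ 0`. -/
noncomputable def GKsgn (t : ℝ) : ℝ := if t < 0 then 1 else -1

open Classical in
/-- The density function `ρ`: `ρ(x) = (−1)^n ∏_k sgn(x_k)` on `C(c,ℓ)`, `0` elsewhere. -/
noncomputable def GKrho {n : ℕ} (c : Fin n → Fin n → ℤ) (ℓ : Fin n → ℤ)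
    (x : Fin n → ℝ) : ℝ :=
  if x ∈ GKcube c ℓ then (-1 : ℝ) ^ n * ∏ k : Fin n, GKsgn (x k) else 0

/-- `(C(c,ℓ), ρ)` is untwisted: `C(c,ℓ)` is closed, convex, the convex hull of a
finite set, and `ρ ≡ 1` on `C(c,ℓ)`.  "Twisted" is the negation of this. -/
noncomputable def GKUntwisted {n : ℕ} (c : Fin n → Fin n → ℤ) (ℓ : Fin n → ℤ) : Prop :=
  IsClosed (GKcube c ℓ) ∧ Convex ℝ (GKcube c ℓ) ∧
  (∃ S : Finset (Fin n → ℝ), GKcube c ℓ = convexHull ℝ (S : Set (Fin n → ℝ))) ∧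
  (∀ x ∈ GKcube c ℓ, GKrho c ℓ x = 1)

/-- The Cartier data `m_σ`, defined by downward recursion:
`m_{σ,k} = 0` if `σ_k = +` (encoded `false`), and
`m_{σ,k} = ℓ_k − Σ_{s>k} c_{ks} m_{σ,s}` if `σ_k = −` (encoded `true`). -/
def GKm {n : ℕ} (c : Fin n → Fin n → ℤ) (ℓ : Fin n → ℤ) (σ : Fin n → Bool)
    (k : Fin n) : ℤ :=
  if σ k then
    ℓ k - ∑ s ∈ (Finset.univ.filter fun s : Fin n => k < s).attach,
      c k s.1 * GKm c ℓ σ s.1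
  else 0
termination_by n - k.val
decreasing_by
  have h := s.2
  simp only [Finset.mem_filter, Finset.mem_univ, true_and, Fin.lt_def] at h
  omega

/-- `A` is the Cartan matrix of a complex semisimple Lie algebra of rank `r`,
i.e. a generalized Cartan matrix of finite type: diagonal entries `2`,
nonpositive off-diagonal entries, `A_{ab} = 0 ↔ A_{ba} = 0`, and `A` is
symmetrizable by positive rationals `d_a` with `(d_a A_{ab})` symmetric
positive definite. -/
def IsCartanMatrix {r : ℕ} (A : Matrix (Fin r) (Fin r) ℤ) : Prop :=
  (∀ a, A a a = 2) ∧
  (∀ a b, a ≠ b → A a b ≤ 0) ∧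
  (∀ a b, A a b = 0 ↔ A b a = 0) ∧
  (∃ d : Fin r → ℚ, (∀ a, 0 < d a) ∧
    (∀ a b, d a * (A a b : ℚ) = d b * (A b a : ℚ)) ∧
    (∀ x : Fin r → ℚ, x ≠ 0 → 0 < ∑ a, ∑ b, x a * d a * (A a b : ℚ) * x b))

/-- `(w_0, …, w_s)` is a diagram walk followed by the condition that the final
root appears in `λ`: a `λ`-walk.  (Successive entries are distinct and adjacent
in the Dynkin diagram, and `λ_{w_s} > 0`.) -/
def IsLambdaWalkSeq {r : ℕ} (A : Matrix (Fin r) (Fin r) ℤ) (lam : Fin r → ℤ)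
    {s : ℕ} (w : Fin (s + 1) → Fin r) : Prop :=
  (∀ t : Fin s, w t.castSucc ≠ w t.succ ∧ A (w t.castSucc) (w t.succ) < 0) ∧
  0 < lam (w (Fin.last s))

/-- `(w_0, w_1, …, w_s)` is a hesitant `λ`-walk: `s ≥ 1`, `w_0 = w_1`, the
walking component `(w_1, …, w_s)` is a diagram walk, and `λ_{w_s} > 0`. -/
def IsHesitantLambdaWalkSeq {r : ℕ} (A : Matrix (Fin r) (Fin r) ℤ)
    (lam : Fin r → ℤ) {s : ℕ} (w : Fin (s + 1) → Fin r) : Prop :=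
  1 ≤ s ∧ w 0 = w 1 ∧
  (∀ t : Fin s, 1 ≤ t.val →
    (w t.castSucc ≠ w t.succ ∧ A (w t.castSucc) (w t.succ) < 0)) ∧
  0 < lam (w (Fin.last s))

/-- The word `i = (i_1, …, i_n)` is hesitant-`λ`-walk-avoiding: no subword
(subsequence, given by a strictly increasing reindexing `j`) is a hesitant
`λ`-walk. -/
def HesitantLambdaWalkAvoiding {r n : ℕ} (A : Matrix (Fin r) (Fin r) ℤ)
    (lam : Fin r → ℤ) (i : Fin n → Fin r) : Prop :=
  ¬ ∃ (s : ℕ) (j : Fin (s + 1) → Fin n), StrictMono j ∧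
      IsHesitantLambdaWalkSeq A lam (i ∘ j)

/-- Minimality of a hesitant `λ`-walk `(w_0, …, w_s)`: the entries of the
walking component `w_1, …, w_s` are pairwise distinct, and if `s ≥ 2` then
`λ_{w_t} = 0` for `0 ≤ t ≤ s − 1`. -/
def MinimalHLW {r s : ℕ} (lam : Fin r → ℤ) (w : Fin (s + 1) → Fin r) : Prop :=
  (∀ p q : Fin (s + 1), 1 ≤ p.val → 1 ≤ q.val → w p = w q → p = q) ∧
  (2 ≤ s → ∀ t : Fin (s + 1), t.val ≤ s - 1 → lam (w t) = 0)

open Filter Topology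

def GKAdmissible (a x : ℝ) : Prop := (a < x ∧ x < 0) ∨ (0 ≤ x ∧ x ≤ a)

theorem gkAdmissible_zero_iff {a : ℝ} : GKAdmissible a 0 ↔ 0 ≤ a := by
  simp [GKAdmissible]

theorem gkAdmissible_self {a : ℝ} (ha : 0 ≤ a) : GKAdmissible a a :=
  Or.inr ⟨ha, le_rfl⟩

theorem gkAdmissible_mul_self {a t : ℝ} (ht : t ∈ Set.Ioo 0 1) : GKAdmissible a (t * a) := by
  obtain ⟨ht0, ht1⟩ := ht
  rcases lt_or_ge a 0 with ha | ha
  · exact Or.inl ⟨by nlinarith, mul_neg_of_pos_of_neg ht0 ha⟩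
  · exact Or.inr ⟨by positivity, by nlinarith⟩

noncomputable def GKshrink (ε a : ℝ) : ℝ := if 0 ≤ a then 0 else max (a / 2) (-ε)

theorem GKshrink_of_nonneg {ε a : ℝ} (ha : 0 ≤ a) : GKshrink ε a = 0 := if_pos ha

theorem abs_GKshrink_le {ε : ℝ} (hε : 0 ≤ ε) (a : ℝ) : |GKshrink ε a| ≤ ε := by
  unfold GKshrink
  split_ifs with ha
  · simpa using hε
  · rw [abs_le]
    exact ⟨le_max_right _ _, max_le (by linarith) (by linarith)⟩

theorem gkAdmissible_GKshrink {ε : ℝ} (hε : 0 < ε) (a : ℝ) : GKAdmissible a (GKshrink ε a) := by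
  unfold GKshrink
  split_ifs with ha
  · exact gkAdmissible_zero_iff.2 ha
  · push Not at ha
    exact Or.inl ⟨lt_max_of_lt_left (by linarith), max_lt (by linarith) (by linarith)⟩

section Cube

variable {n : ℕ} {c : Fin n → Fin n → ℤ} {ℓ : Fin n → ℤ}

theorem mem_GKcube_iff {x : Fin n → ℝ} :
    x ∈ GKcube c ℓ ↔ ∀ k, GKAdmissible (GKA c ℓ k x) (x k) := Iff.rfl

theorem continuous_GKA (k : Fin n) : Continuous (GKA c ℓ k) := by
  unfold GKA
  fun_prop

theorem GKA_congr {p : Fin n} {x y : Fin n → ℝ} (h : ∀ k, p < k → x k = y k) :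
    GKA c ℓ p x = GKA c ℓ p y := by
  unfold GKA
  congr 1
  refine Finset.sum_congr rfl fun k hk => ?_
  rw [h k (Finset.mem_filter.1 hk).2]

theorem GKA_of_forall_eq_zero {p : Fin n} {x : Fin n → ℝ} (h : ∀ k, p < k → x k = 0) :
    GKA c ℓ p x = ℓ p := by
  rw [GKA_congr (y := 0) h]
  simp [GKA]

theorem GKA_le_of_abs_le {x : Fin n → ℝ} {i j : Fin n} (hij : i < j) {ε : ℝ} (hε : 0 ≤ ε)
    (hx : ∀ k, i < k → k ≠ j → |x k| ≤ ε) :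
    GKA c ℓ i x ≤ ℓ i - c i j * x j + ε * ∑ k ∈ univ.filter (i < ·), |(c i k : ℝ)| := by
  set F := univ.filter (fun k : Fin n => i < k)
  have hjF : j ∈ F := by simp [F, hij]
  have hrest : -∑ k ∈ F.erase j, (c i k : ℝ) * x k ≤ ε * ∑ k ∈ F, |(c i k : ℝ)| :=
    calc -∑ k ∈ F.erase j, (c i k : ℝ) * x k
        ≤ ∑ k ∈ F.erase j, |(c i k : ℝ)| * ε := by
          rw [← Finset.sum_neg_distrib]
          refine Finset.sum_le_sum fun k hk => ?_
          obtain ⟨hkj, hkF⟩ := Finset.mem_erase.1 hk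
          calc -((c i k : ℝ) * x k) ≤ |(c i k : ℝ) * x k| := neg_le_abs _
            _ = |(c i k : ℝ)| * |x k| := abs_mul _ _
            _ ≤ |(c i k : ℝ)| * ε :=
              mul_le_mul_of_nonneg_left (hx k (Finset.mem_filter.1 hkF).2 hkj) (abs_nonneg _)
      _ ≤ ∑ k ∈ F, |(c i k : ℝ)| * ε :=
          Finset.sum_le_sum_of_subset_of_nonneg (Finset.erase_subset _ _)
            fun _ _ _ => mul_nonneg (abs_nonneg _) hε
      _ = ε * ∑ k ∈ F, |(c i k : ℝ)| := by rw [← Finset.sum_mul, mul_comm]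
  rw [GKA, ← Finset.add_sum_erase F _ hjF]
  linarith

noncomputable def GKPoint (c : Fin n → Fin n → ℤ) (ℓ : Fin n → ℤ) (φ : Fin n → ℝ → ℝ)
    (k : Fin n) : ℝ :=
  φ k ((ℓ k : ℝ) - ∑ s ∈ (univ.filter fun s : Fin n => k < s).attach,
    (c k s.1 : ℝ) * GKPoint c ℓ φ s.1)
termination_by n - k.val
decreasing_by
  have h := s.2
  simp only [Finset.mem_filter, Finset.mem_univ, true_and, Fin.lt_def] at h
  omega

theorem GKPoint_apply (φ : Fin n → ℝ → ℝ) (k : Fin n) :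
    GKPoint c ℓ φ k = φ k (GKA c ℓ k (GKPoint c ℓ φ)) := by
  rw [GKPoint, GKA, Finset.sum_attach (univ.filter fun s : Fin n => k < s)
    (fun s => (c k s : ℝ) * GKPoint c ℓ φ s)]

theorem GKPoint_congr {φ ψ : Fin n → ℝ → ℝ} {p : Fin n} (h : ∀ k, p < k → φ k = ψ k) :
    ∀ k, p < k → GKPoint c ℓ φ k = GKPoint c ℓ ψ k := by
  intro k
  induction k using WellFoundedGT.induction with
  | _ k ih =>
    intro hk
    rw [GKPoint_apply, GKPoint_apply, h k hk, GKA_congr fun m hm => ih m hm (hk.trans hm)]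

theorem GKPoint_eq_zero_of_lt {φ : Fin n → ℝ → ℝ} {p : Fin n}
    (h : ∀ k, p < k → φ k (ℓ k) = 0) : ∀ k, p < k → GKPoint c ℓ φ k = 0 := by
  intro k
  induction k using WellFoundedGT.induction with
  | _ k ih =>
    intro hk
    rw [GKPoint_apply, GKA_of_forall_eq_zero fun m hm => ih m hm (hk.trans hm), h k hk]

theorem not_isCompact_GKcube {i : Fin n} {a : ℝ} (ha : a < 0)
    (hx : ∀ t ∈ Set.Ioo (0 : ℝ) 1, ∃ x ∈ GKcube c ℓ, GKA c ℓ i x = a ∧ x i = t * a) :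
    ¬ IsCompact (GKcube c ℓ) := by
  intro hK
  set S := GKcube c ℓ ∩ {x | GKA c ℓ i x = a}
  have hS : IsClosed ((fun x : Fin n → ℝ => x i) '' S) :=
    ((hK.inter_right (isClosed_eq (continuous_GKA i) continuous_const)).image
      (continuous_apply i)).isClosed
  have hlim : Tendsto (fun t : ℝ => t * a) (𝓝[>] 0) (𝓝 0) := by
    simpa using ((continuous_mul_const a).tendsto 0).mono_left nhdsWithin_le_nhds
  obtain ⟨y, ⟨hy, hyA⟩, hyi⟩ : (0 : ℝ) ∈ (fun x : Fin n → ℝ => x i) '' S := by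
    refine hS.mem_of_tendsto hlim ?_
    filter_upwards [Ioo_mem_nhdsGT one_pos] with t ht
    obtain ⟨x, hx, hxA, hxi⟩ := hx t ht
    exact ⟨x, ⟨hx, hxA⟩, hxi⟩
  have hyi' := mem_GKcube_iff.1 hy i
  rw [hyA, show y i = 0 from hyi] at hyi'
  exact ha.not_ge (gkAdmissible_zero_iff.1 hyi')

theorem GKUntwisted.isCompact (h : GKUntwisted c ℓ) : IsCompact (GKcube c ℓ) := by
  obtain ⟨S, hS⟩ := h.2.2.1
  rw [hS]
  exact S.finite_toSet.isCompact_convexHull ℝ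

noncomputable def GKWitness (c : Fin n → Fin n → ℤ) (ℓ : Fin n → ℤ) (i j : Fin n) (ε t : ℝ) :
    Fin n → ℝ :=
  GKPoint c ℓ fun k a => if k = i then t * a else if k = j then a else GKshrink ε a

section Witness

variable {i j : Fin n} {ε : ℝ}

theorem GKA_GKWitness_of_le (hℓ : ∀ p, 0 ≤ ℓ p) (hij : i < j) (t : ℝ) {p : Fin n} (hp : j ≤ p) :
    GKA c ℓ p (GKWitness c ℓ i j ε t) = ℓ p := by
  refine GKA_of_forall_eq_zero fun k hk => ?_
  refine GKPoint_eq_zero_of_lt (fun k hk => ?_) k (hp.trans_lt hk)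
  have hℓk : (0 : ℝ) ≤ ℓ k := by exact_mod_cast hℓ k
  simp [(hij.trans hk).ne', hk.ne', GKshrink_of_nonneg hℓk]

theorem GKWitness_apply_self_right (hℓ : ∀ p, 0 ≤ ℓ p) (hij : i < j) (t : ℝ) :
    GKWitness c ℓ i j ε t j = ℓ j := by
  rw [GKWitness, GKPoint_apply, ← GKWitness, GKA_GKWitness_of_le hℓ hij t le_rfl]
  simp [hij.ne']

theorem GKWitness_apply_self_left (t : ℝ) :
    GKWitness c ℓ i j ε t i = t * GKA c ℓ i (GKWitness c ℓ i j ε t) := by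
  rw [GKWitness, GKPoint_apply]
  simp

theorem abs_GKWitness_le (hε : 0 ≤ ε) (t : ℝ) {k : Fin n} (hki : k ≠ i) (hkj : k ≠ j) :
    |GKWitness c ℓ i j ε t k| ≤ ε := by
  rw [GKWitness, GKPoint_apply]
  simpa [hki, hkj] using abs_GKshrink_le hε _

theorem GKA_GKWitness_left_indep (t t' : ℝ) :
    GKA c ℓ i (GKWitness c ℓ i j ε t) = GKA c ℓ i (GKWitness c ℓ i j ε t') :=
  GKA_congr <| GKPoint_congr fun k hk => by simp [hk.ne']

theorem GKWitness_mem_GKcube (hℓ : ∀ p, 0 ≤ ℓ p) (hij : i < j) (hε : 0 < ε)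
    {t : ℝ} (ht : t ∈ Set.Ioo 0 1) : GKWitness c ℓ i j ε t ∈ GKcube c ℓ := by
  refine mem_GKcube_iff.2 fun k => ?_
  rw [GKWitness, GKPoint_apply, ← GKWitness]
  by_cases hki : k = i
  · simpa only [if_pos hki] using gkAdmissible_mul_self ht
  by_cases hkj : k = j
  · rw [if_neg hki, if_pos hkj, hkj, GKA_GKWitness_of_le hℓ hij t le_rfl]
    exact gkAdmissible_self (by exact_mod_cast hℓ j)
  · simpa only [if_neg hki, if_neg hkj] using gkAdmissible_GKshrink hε _

end Witness

theorem exists_mem_GKcube_coord_eq_mul (hℓ : ∀ p, 0 ≤ ℓ p) {i j : Fin n} (hij : i < j)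
    (hc : 1 < c i j) (heq : ℓ i = ℓ j) (hpos : 0 < ℓ j) :
    ∃ a < 0, ∀ t ∈ Set.Ioo (0 : ℝ) 1, ∃ x ∈ GKcube c ℓ, GKA c ℓ i x = a ∧ x i = t * a := by
  set M := ∑ k ∈ univ.filter (i < ·), |(c i k : ℝ)|
  set ε : ℝ := 1 / (2 * (M + 1))
  have hε : 0 < ε := by positivity
  have hεM : ε * M ≤ 1 / 2 := by
    rw [div_mul_eq_mul_div, div_le_div_iff₀ (by positivity) two_pos]
    linarith
  have hAi : GKA c ℓ i (GKWitness c ℓ i j ε (1 / 2)) ≤ -(1 / 2) := by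
    have hle := GKA_le_of_abs_le (c := c) (ℓ := ℓ) (x := GKWitness c ℓ i j ε (1 / 2)) hij hε.le
      fun k hik hkj => abs_GKWitness_le hε.le _ hik.ne' hkj
    rw [GKWitness_apply_self_right hℓ hij, heq] at hle
    have hcij : (2 : ℝ) ≤ c i j := by exact_mod_cast hc
    have hℓj : (1 : ℝ) ≤ ℓ j := by exact_mod_cast hpos
    nlinarith
  refine ⟨_, hAi.trans_lt (by norm_num), fun t ht =>
    ⟨GKWitness c ℓ i j ε t, GKWitness_mem_GKcube hℓ hij hε ht, GKA_GKWitness_left_indep t _, ?_⟩⟩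
  rw [GKWitness_apply_self_left, GKA_GKWitness_left_indep t (1 / 2)]

end Cube

/-- If `ℓ_i ≥ 0` for all `i` and there are indices `i < j`
with `c_{ij} > 1` and `ℓ_i = ℓ_j > 0`, then `(C(c,ℓ), ρ)` is twisted. -/
theorem statement3 {n : ℕ} (c : Fin n → Fin n → ℤ) (ℓ : Fin n → ℤ)
    (hℓ : ∀ p, 0 ≤ ℓ p) (i j : Fin n) (hij : i < j)
    (hc : 1 < c i j) (heq : ℓ i = ℓ j) (hpos : 0 < ℓ j) :
    ¬ GKUntwisted c ℓ := fun hU =>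
  let ⟨_, ha, hx⟩ := exists_mem_GKcube_coord_eq_mul hℓ hij hc heq hpos
  not_isCompact_GKcube ha hx hU.isCompact
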